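/- arXiv:math/0404311 — 3 statements merged into one kernel-verified Lean document; each statement's English description precedes it below -/
import Mathlib

section
/- Define b₀ = (c₁c₂⋯c_{2h}) · c_{2h+1} · (c₁c₂⋯c_{2h})⁻¹. Then for every integer m with 1 ≤ m ≤ h−1, the product (c_{2m+2}c_{2m+3}⋯c_{2h}c_{2h+1}) · (c_{2m}c_{2m−1}⋯c₂c₁) · b₀ · (c_{2h+1}c_{2h}⋯c_{2m+2}) · (c₁c₂⋯c_{2m}) · c_{2m+1} is equal to (c_{2m}c_{2m−1}⋯c₂c₁) · (c₁c₂⋯c_{2h}c_{2h+1}) · (c_{2h+1}c_{2h}⋯c_{2m+2}c_{2m+1}). -/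
/-!
Write `δ = c₁ c₂ ⋯ c_{2h+1}`. The braid and commutation relations give `δ c_j = c_{j+1} δ`
for `1 ≤ j ≤ 2h`: in `δ c_j` the letter `c_j` slides left past `c_{2h+1}, …, c_{j+2}`, turns
`c_j c_{j+1} c_j` into `c_{j+1} c_j c_{j+1}`, and the new `c_{j+1}` slides past `c_{j-1}, …, c₁`.
Hence conjugation by `δ` shifts every ascending block of indices in `[1, 2h]` up by one. Now
`b₀ = δ (c₁⋯c_{2h})⁻¹`; splitting `c₁⋯c_{2h} = (c₁⋯c_{2m})(c_{2m+1}⋯c_{2h})`, the block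
`c_{2m+2}⋯c_{2h+1}` on the left passes through `c_{2m}⋯c₁` (all indices differ by at least 2) and
through `δ`, where it becomes `c_{2m+1}⋯c_{2h}` and cancels; what remains only needs
`c_{2h+1}⋯c_{2m+2}` to commute with `c₁⋯c_{2m}`.
-/

/-- The ascending product `c a * c (a+1) * ⋯ * c b`. -/
def ascProd {G : Type*} [Group G] (c : ℕ → G) (a b : ℕ) : G :=
  ((List.range' a (b + 1 - a)).map c).prod

/-- The descending product `c b * c (b-1) * ⋯ * c a`. -/
def descProd {G : Type*} [Group G] (c : ℕ → G) (a b : ℕ) : G :=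
  (((List.range' a (b + 1 - a)).reverse).map c).prod

lemma SemiconjBy.list_prod_map {M ι : Type*} [Monoid M] {g : M} {f f' : ι → M} {l : List ι}
    (h : ∀ i ∈ l, SemiconjBy g (f i) (f' i)) :
    SemiconjBy g (l.map f).prod (l.map f').prod := by
  induction l with
  | nil => exact SemiconjBy.one_right g
  | cons i l ih =>
    simpa using (h i List.mem_cons_self).mul_right
      (ih fun j hj => h j (List.mem_cons_of_mem i hj))

section ChainProducts

variable {G : Type*} [Group G] (c : ℕ → G)

lemma ascProd_mul_ascProd {a t b : ℕ} (hat : a ≤ t + 1) (htb : t ≤ b) :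
    ascProd c a t * ascProd c (t + 1) b = ascProd c a b := by
  unfold ascProd
  have hsplit := List.range'_append_1 (s := a) (m := t + 1 - a) (n := b + 1 - (t + 1))
  rw [show a + (t + 1 - a) = t + 1 by omega,
    show t + 1 - a + (b + 1 - (t + 1)) = b + 1 - a by omega] at hsplit
  rw [← List.prod_append, ← List.map_append, hsplit]

lemma ascProd_eq_mul_ascProd {a b : ℕ} (hab : a ≤ b) :
    ascProd c a b = c a * ascProd c (a + 1) b := by
  unfold ascProd
  rw [show b + 1 - a = b + 1 - (a + 1) + 1 by omega, List.range'_succ]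
  simp

lemma ascProd_succ {a b : ℕ} (hab : a ≤ b + 1) :
    ascProd c a (b + 1) = ascProd c a b * c (b + 1) := by
  unfold ascProd
  rw [show b + 1 + 1 - a = b + 1 - a + 1 by omega, List.range'_1_concat]
  simp [show a + (b + 1 - a) = b + 1 by omega]

lemma descProd_eq_descProd_mul {a b : ℕ} (hab : a ≤ b) :
    descProd c a b = descProd c (a + 1) b * c a := by
  unfold descProd
  rw [show b + 1 - a = b + 1 - (a + 1) + 1 by omega, List.range'_succ]
  simp

lemma ascProd_succ_succ (a b : ℕ) :
    ascProd c (a + 1) (b + 1) = ascProd (fun i => c (i + 1)) a b := by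
  unfold ascProd
  rw [show b + 1 + 1 - (a + 1) = b + 1 - a by omega, List.range'_succ_left, List.map_map]
  rfl

variable {c}

lemma Commute.ascProd_right {x : G} {a b : ℕ} (hx : ∀ i, a ≤ i → i ≤ b → Commute x (c i)) :
    Commute x (ascProd c a b) :=
  Commute.list_prod_right _ _ fun y hy => by
    obtain ⟨i, hi, rfl⟩ := List.mem_map.1 hy
    rw [List.mem_range'_1] at hi
    exact hx i hi.1 (by omega)

lemma Commute.descProd_right {x : G} {a b : ℕ} (hx : ∀ i, a ≤ i → i ≤ b → Commute x (c i)) :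
    Commute x (descProd c a b) :=
  Commute.list_prod_right _ _ fun y hy => by
    obtain ⟨i, hi, rfl⟩ := List.mem_map.1 hy
    rw [List.mem_reverse, List.mem_range'_1] at hi
    exact hx i hi.1 (by omega)

lemma SemiconjBy.ascProd_succ_succ {g : G} {a b : ℕ}
    (hg : ∀ i, a ≤ i → i ≤ b → SemiconjBy g (c i) (c (i + 1))) :
    SemiconjBy g (ascProd c a b) (ascProd c (a + 1) (b + 1)) := by
  rw [_root_.ascProd_succ_succ]
  refine SemiconjBy.list_prod_map fun i hi => ?_
  rw [List.mem_range'_1] at hi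
  exact hg i hi.1 (by omega)

end ChainProducts

section Chain

variable {G : Type*} [Group G] {h : ℕ} {c : ℕ → G}
    (braid : ∀ j, 1 ≤ j → j ≤ 2 * h → c j * c (j + 1) * c j = c (j + 1) * c j * c (j + 1))
    (comm : ∀ j l, 1 ≤ j → j ≤ 2 * h + 1 → 1 ≤ l → l ≤ 2 * h + 1 →
      (j + 2 ≤ l ∨ l + 2 ≤ j) → c j * c l = c l * c j)
include braid comm

lemma semiconjBy_ascProd_one {j n : ℕ} (hj : 1 ≤ j) (hjn : j < n) (hn : n ≤ 2 * h + 1) :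
    SemiconjBy (ascProd c 1 n) (c j) (c (j + 1)) := by
  obtain ⟨k, rfl⟩ : ∃ k, j = k + 1 := ⟨j - 1, by omega⟩
  rw [← ascProd_mul_ascProd c (t := k) (by omega) (by omega),
    ascProd_eq_mul_ascProd c (a := k + 1) (by omega),
    ascProd_eq_mul_ascProd c (a := k + 1 + 1) (by omega)]
  set A := ascProd c 1 k
  set B := ascProd c (k + 1 + 1 + 1) n
  have hA : Commute A (c (k + 1 + 1)) :=
    (Commute.ascProd_right fun i hi hik =>
      comm _ i (by omega) (by omega) hi (by omega) (Or.inr (by omega))).symm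
  have hB : Commute B (c (k + 1)) :=
    (Commute.ascProd_right fun i hi hin =>
      comm _ i (by omega) (by omega) (by omega) (by omega) (Or.inl (by omega))).symm
  unfold SemiconjBy
  calc A * (c (k + 1) * (c (k + 1 + 1) * B)) * c (k + 1)
      = A * (c (k + 1) * c (k + 1 + 1) * c (k + 1)) * B := by simp only [mul_assoc, hB.eq]
    _ = A * (c (k + 1 + 1) * c (k + 1) * c (k + 1 + 1)) * B := by
      rw [braid (k + 1) (by omega) (by omega)]
    _ = c (k + 1 + 1) * (A * (c (k + 1) * (c (k + 1 + 1) * B))) := by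
      simp only [← mul_assoc, hA.eq]

lemma semiconjBy_ascProd_one_ascProd {a b n : ℕ} (ha : 1 ≤ a) (hbn : b < n)
    (hn : n ≤ 2 * h + 1) :
    SemiconjBy (ascProd c 1 n) (ascProd c a b) (ascProd c (a + 1) (b + 1)) :=
  SemiconjBy.ascProd_succ_succ fun _ hi hib =>
    semiconjBy_ascProd_one braid comm (by omega) (by omega) hn

end Chain

theorem stmt0_general {G : Type*} [Group G] (h : ℕ) (c : ℕ → G)
    (braid : ∀ j, 1 ≤ j → j ≤ 2 * h → c j * c (j + 1) * c j = c (j + 1) * c j * c (j + 1))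
    (comm : ∀ j l, 1 ≤ j → j ≤ 2 * h + 1 → 1 ≤ l → l ≤ 2 * h + 1 →
      (j + 2 ≤ l ∨ l + 2 ≤ j) → c j * c l = c l * c j)
    (b₀ : G) (hb₀ : b₀ = ascProd c 1 (2 * h) * c (2 * h + 1) * (ascProd c 1 (2 * h))⁻¹) :
    ∀ m, 1 ≤ m → m ≤ h - 1 →
      ascProd c (2 * m + 2) (2 * h + 1) * descProd c 1 (2 * m) * b₀ *
          descProd c (2 * m + 2) (2 * h + 1) * ascProd c 1 (2 * m) * c (2 * m + 1) =
        descProd c 1 (2 * m) * ascProd c 1 (2 * h + 1) *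
          descProd c (2 * m + 1) (2 * h + 1) := by
  intro m hm1 hm2
  set δ := ascProd c 1 (2 * h + 1)
  set P := ascProd c 1 (2 * m)
  set U := ascProd c (2 * m + 2) (2 * h + 1)
  set U' := ascProd c (2 * m + 1) (2 * h)
  set V := descProd c 1 (2 * m)
  set W := descProd c (2 * m + 2) (2 * h + 1)
  have hb : b₀ = δ * (P * U')⁻¹ := by
    rw [hb₀, ascProd_mul_ascProd c (by omega) (by omega), ← ascProd_succ c (by omega)]
  have hUδ : SemiconjBy δ U' U :=
    semiconjBy_ascProd_one_ascProd braid comm (by omega) (by omega) le_rfl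
  have hUV : Commute U V :=
    Commute.descProd_right fun j hj hjm => (Commute.ascProd_right fun i hi hih =>
      comm j i hj (by omega) (by omega) hih (Or.inl (by omega))).symm
  have hWP : Commute W P :=
    Commute.ascProd_right fun j hj hjm => (Commute.descProd_right fun i hi hih =>
      comm j i hj (by omega) (by omega) hih (Or.inl (by omega))).symm
  have hD : descProd c (2 * m + 1) (2 * h + 1) = W * c (2 * m + 1) :=
    descProd_eq_descProd_mul c (by omega)
  rw [hb, hD]
  calc U * V * (δ * (P * U')⁻¹) * W * P * c (2 * m + 1)
      = V * (U * δ) * U'⁻¹ * P⁻¹ * (W * P) * c (2 * m + 1) := by rw [hUV.eq]; group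
    _ = V * (δ * U') * U'⁻¹ * P⁻¹ * (P * W) * c (2 * m + 1) := by rw [← hUδ.eq, hWP.eq]
    _ = V * δ * (W * c (2 * m + 1)) := by group

/-- with `b₀ = (c₁⋯c_{2h}) c_{2h+1} (c₁⋯c_{2h})⁻¹`, for `1 ≤ m ≤ h-1`,
`(c_{2m+2}⋯c_{2h+1})(c_{2m}⋯c₁) b₀ (c_{2h+1}⋯c_{2m+2})(c₁⋯c_{2m}) c_{2m+1}
  = (c_{2m}⋯c₁)(c₁⋯c_{2h+1})(c_{2h+1}⋯c_{2m+1})`. -/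
theorem stmt0 {G : Type*} [Group G] (h : ℕ) (hh : 2 ≤ h) (c : ℕ → G)
    (braid : ∀ j, 1 ≤ j → j ≤ 2 * h → c j * c (j + 1) * c j = c (j + 1) * c j * c (j + 1))
    (comm : ∀ j l, 1 ≤ j → j ≤ 2 * h + 1 → 1 ≤ l → l ≤ 2 * h + 1 →
      (j + 2 ≤ l ∨ l + 2 ≤ j) → c j * c l = c l * c j)
    (b₀ : G) (hb₀ : b₀ = ascProd c 1 (2 * h) * c (2 * h + 1) * (ascProd c 1 (2 * h))⁻¹) :
    ∀ m, 1 ≤ m → m ≤ h - 1 →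
      ascProd c (2 * m + 2) (2 * h + 1) * descProd c 1 (2 * m) * b₀ *
          descProd c (2 * m + 2) (2 * h + 1) * ascProd c 1 (2 * m) * c (2 * m + 1) =
        descProd c 1 (2 * m) * ascProd c 1 (2 * h + 1) *
          descProd c (2 * m + 1) (2 * h + 1) :=
  stmt0_general h c braid comm b₀ hb₀
end

section
/- For every integer m with 1 ≤ m ≤ h−1, the product (c₁c₂⋯c_{2h}c_{2h+1}) · (c_{2h}⁻¹c_{2h−1}⁻¹⋯c_{2m+2}⁻¹c_{2m+1}⁻¹) is equal to (c_{2h+1}⁻¹c_{2h}⁻¹⋯c_{2m+2}⁻¹) · (c₁c₂⋯c_{2h}c_{2h+1}). -/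
/-!
Write `Δ = c₁ c₂ ⋯ c_n` for a chain `c₁, …, c_n`. Splitting `Δ = P (c_j c_{j+1}) Q`, where
`c_{j+1}` commutes with `P = c₁ ⋯ c_{j-1}` and `c_j` commutes with `Q = c_{j+2} ⋯ c_n`, one braid
relation gives `c_{j+1} Δ = Δ c_j`: conjugation by `Δ` shifts the chain down by one. Applying this
to every factor, `(c_{2m+2} ⋯ c_{2h+1}) Δ = Δ (c_{2m+1} ⋯ c_{2h})`, which rearranges to the claim.
-/

/-- `c a * c (a+1) * ⋯ * c (a+n-1)`: indexing by length avoids the truncated subtraction in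
`ascProd`. -/
def prodFrom {M : Type*} [Monoid M] (c : ℕ → M) (a n : ℕ) : M :=
  ((List.range' a n).map c).prod

section prodFrom

variable {M : Type*} [Monoid M] (c : ℕ → M)

lemma prodFrom_zero (a : ℕ) : prodFrom c a 0 = 1 := rfl

lemma prodFrom_succ (a n : ℕ) : prodFrom c a (n + 1) = c a * prodFrom c (a + 1) n := by
  simp [prodFrom, List.range'_succ]

lemma prodFrom_add (a m n : ℕ) :
    prodFrom c a (m + n) = prodFrom c a m * prodFrom c (a + m) n := by
  rw [prodFrom, prodFrom, prodFrom, ← List.range'_append_1, List.map_append, List.prod_append]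

lemma prodFrom_two (a : ℕ) : prodFrom c a 2 = c a * c (a + 1) := by
  simp [prodFrom, List.range'_succ]

lemma Commute.prodFrom_right {x : M} {a n : ℕ}
    (hx : ∀ i, a ≤ i → i < a + n → Commute x (c i)) : Commute x (prodFrom c a n) := by
  refine Commute.list_prod_right _ _ fun y hy => ?_
  obtain ⟨i, hi, rfl⟩ := List.mem_map.mp hy
  obtain ⟨hai, hin⟩ := List.mem_range'_1.mp hi
  exact hx i hai hin

end prodFrom

/-- `c 1, …, c n` satisfy the relations of the Artin group of type `A_n`, as do the Dehn twists
about a chain of `n` curves. -/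
structure IsBraidChain {M : Type*} [Monoid M] (c : ℕ → M) (n : ℕ) : Prop where
  braid : ∀ j, 1 ≤ j → j < n → c j * c (j + 1) * c j = c (j + 1) * c j * c (j + 1)
  commute : ∀ j l, 1 ≤ j → j + 2 ≤ l → l ≤ n → Commute (c j) (c l)

namespace IsBraidChain

variable {M : Type*} [Monoid M] {c : ℕ → M} {n : ℕ}

lemma mul_prodFrom_one (hc : IsBraidChain c n) {j : ℕ} (hj : 1 ≤ j) (hjn : j < n) :
    c (j + 1) * prodFrom c 1 n = prodFrom c 1 n * c j := by
  set P := prodFrom c 1 (j - 1)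
  set Q := prodFrom c (j + 2) (n - (j + 1))
  have hsplit : prodFrom c 1 n = P * (c j * c (j + 1)) * Q := by
    rw [show n = j - 1 + (2 + (n - (j + 1))) by omega, prodFrom_add, prodFrom_add,
      show 1 + (j - 1) = j by omega, prodFrom_two]
    simp only [P, Q, mul_assoc]
  have hP : Commute (c (j + 1)) P :=
    Commute.prodFrom_right c fun i hi hij => (hc.commute i (j + 1) hi (by omega) (by omega)).symm
  have hQ : Commute (c j) Q :=
    Commute.prodFrom_right c fun i hi hin => hc.commute j i hj (by omega) (by omega)
  calc c (j + 1) * prodFrom c 1 n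
      = P * (c (j + 1) * c j * c (j + 1)) * Q := by
        rw [hsplit, ← mul_assoc, ← mul_assoc, hP.eq]; simp only [mul_assoc]
    _ = P * (c j * c (j + 1)) * (c j * Q) := by
        rw [← hc.braid j hj hjn]; simp only [mul_assoc]
    _ = prodFrom c 1 n * c j := by
        rw [hQ.eq, hsplit]; simp only [mul_assoc]

lemma prodFrom_succ_mul_prodFrom_one (hc : IsBraidChain c n) {a : ℕ} (ha : 1 ≤ a) :
    ∀ {k}, a + k ≤ n → prodFrom c (a + 1) k * prodFrom c 1 n = prodFrom c 1 n * prodFrom c a k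
  | 0, _ => by rw [prodFrom_zero, prodFrom_zero, one_mul, mul_one]
  | k + 1, hak => by
    rw [prodFrom_succ, prodFrom_succ, mul_assoc, prodFrom_succ_mul_prodFrom_one hc (a := a + 1) (by omega) (by omega),
      ← mul_assoc, hc.mul_prodFrom_one ha (by omega), mul_assoc]

end IsBraidChain

lemma ascProd_eq_prodFrom {G : Type*} [Group G] (c : ℕ → G) (a b : ℕ) :
    ascProd c a b = prodFrom c a (b + 1 - a) := rfl

theorem stmt2_general {G : Type*} [Group G] (h : ℕ) (c : ℕ → G)
    (braid : ∀ j, 1 ≤ j → j ≤ 2 * h → c j * c (j + 1) * c j = c (j + 1) * c j * c (j + 1))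
    (comm : ∀ j l, 1 ≤ j → j ≤ 2 * h + 1 → 1 ≤ l → l ≤ 2 * h + 1 →
      (j + 2 ≤ l ∨ l + 2 ≤ j) → c j * c l = c l * c j) :
    ∀ m, 1 ≤ m → m ≤ h - 1 →
      ascProd c 1 (2 * h + 1) * (ascProd c (2 * m + 1) (2 * h))⁻¹ =
        (ascProd c (2 * m + 2) (2 * h + 1))⁻¹ * ascProd c 1 (2 * h + 1) := by
  intro m _ hmh
  have hc : IsBraidChain c (2 * h + 1) :=
    ⟨fun j hj hjn => braid j hj (by omega),
      fun j l hj hjl hln => comm j l hj (by omega) (by omega) hln (Or.inl hjl)⟩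
  have hshift := hc.prodFrom_succ_mul_prodFrom_one (a := 2 * m + 1) (k := 2 * h - 2 * m)
    (by omega) (by omega)
  rw [ascProd_eq_prodFrom, ascProd_eq_prodFrom, ascProd_eq_prodFrom,
    show 2 * h + 1 + 1 - 1 = 2 * h + 1 by omega, show 2 * h + 1 - (2 * m + 1) = 2 * h - 2 * m by omega,
    show 2 * h + 1 + 1 - (2 * m + 2) = 2 * h - 2 * m by omega, eq_inv_mul_iff_mul_eq,
    ← mul_assoc, hshift, mul_inv_cancel_right]

/-- for `1 ≤ m ≤ h-1`,
`(c₁⋯c_{2h+1})(c_{2h}⁻¹⋯c_{2m+1}⁻¹) = (c_{2h+1}⁻¹⋯c_{2m+2}⁻¹)(c₁⋯c_{2h+1})`. -/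
theorem stmt2 {G : Type*} [Group G] (h : ℕ) (hh : 2 ≤ h) (c : ℕ → G)
    (braid : ∀ j, 1 ≤ j → j ≤ 2 * h → c j * c (j + 1) * c j = c (j + 1) * c j * c (j + 1))
    (comm : ∀ j l, 1 ≤ j → j ≤ 2 * h + 1 → 1 ≤ l → l ≤ 2 * h + 1 →
      (j + 2 ≤ l ∨ l + 2 ≤ j) → c j * c l = c l * c j) :
    ∀ m, 1 ≤ m → m ≤ h - 1 →
      ascProd c 1 (2 * h + 1) * (ascProd c (2 * m + 1) (2 * h))⁻¹ =
        (ascProd c (2 * m + 2) (2 * h + 1))⁻¹ * ascProd c 1 (2 * h + 1) :=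
  stmt2_general h c braid comm
end

section
/- Let ι = (c₁c₂⋯c_{2h+1}) · (c_{2h+1}c_{2h}⋯c₂c₁), and suppose that ι commutes with each c_j for 1 ≤ j ≤ 2h+1. Then for every integer m with 1 ≤ m ≤ h−1, the element W = (c_{2m}c_{2m−1}⋯c₁) · (c₁c₂⋯c_{2h+1}) · (c_{2h+1}c_{2h}⋯c_{2m+1}) satisfies W² = ι · W. -/
theorem sq_eq_of_mul_mul_eq_of_commute {M : Type*} [Monoid M] {ι a d₁ d₂ : M}
    (hι : ι = a * (d₂ * d₁)) (hcomm : Commute ι d₁) :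
    (d₁ * a * d₂) ^ 2 = ι * (d₁ * a * d₂) := by
  calc (d₁ * a * d₂) ^ 2 = d₁ * (a * (d₂ * d₁)) * a * d₂ := by noncomm_ring
    _ = ι * (d₁ * a * d₂) := by rw [← hι, ← hcomm.eq]; simp only [mul_assoc]

section DescProd

variable {G : Type*} [Group G] (c : ℕ → G)

theorem descProd_mul_descProd {a k b : ℕ} (hak : a ≤ k + 1) (hkb : k ≤ b) :
    descProd c (k + 1) b * descProd c a k = descProd c a b := by
  have hlen : b + 1 - a = (k + 1 - a) + (b - k) := by omega
  have hmid : a + 1 * (k + 1 - a) = k + 1 := by omega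
  have htop : b + 1 - (k + 1) = b - k := by omega
  rw [descProd, descProd, descProd, ← List.prod_append, ← List.map_append,
    ← List.reverse_append, hlen, htop, ← List.range'_append, hmid]

theorem commute_descProd {x : G} {a b : ℕ} (hx : ∀ j, a ≤ j → j ≤ b → Commute x (c j)) :
    Commute x (descProd c a b) := by
  refine Commute.list_prod_right _ _ fun y hy => ?_
  obtain ⟨j, hj, rfl⟩ := List.mem_map.mp hy
  rw [List.mem_reverse, List.mem_range'_1] at hj
  exact hx j hj.1 (by omega)

end DescProd

theorem stmt3_general {G : Type*} [Group G] (h : ℕ) (c : ℕ → G)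
    (ι : G) (hι : ι = ascProd c 1 (2 * h + 1) * descProd c 1 (2 * h + 1))
    (hcomm : ∀ j, 1 ≤ j → j ≤ 2 * h + 1 → ι * c j = c j * ι) :
    ∀ m, 1 ≤ m → m ≤ h - 1 →
      ∀ W : G, W = descProd c 1 (2 * m) * ascProd c 1 (2 * h + 1) *
          descProd c (2 * m + 1) (2 * h + 1) →
        W ^ 2 = ι * W := by
  rintro m - hmh W rfl
  refine sq_eq_of_mul_mul_eq_of_commute ?_ (commute_descProd c fun j hj1 hj => ?_)
  · rwa [descProd_mul_descProd c (by omega) (by omega)]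
  · exact hcomm j hj1 (by omega)

/-- if `ι = (c₁⋯c_{2h+1})(c_{2h+1}⋯c₁)` commutes with each `c_j`, then for
`1 ≤ m ≤ h-1` the element `W = (c_{2m}⋯c₁)(c₁⋯c_{2h+1})(c_{2h+1}⋯c_{2m+1})`
satisfies `W² = ι·W`. -/
theorem stmt3 {G : Type*} [Group G] (h : ℕ) (hh : 2 ≤ h) (c : ℕ → G)
    (ι : G) (hι : ι = ascProd c 1 (2 * h + 1) * descProd c 1 (2 * h + 1))
    (hcomm : ∀ j, 1 ≤ j → j ≤ 2 * h + 1 → ι * c j = c j * ι) :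
    ∀ m, 1 ≤ m → m ≤ h - 1 →
      ∀ W : G, W = descProd c 1 (2 * m) * ascProd c 1 (2 * h + 1) *
          descProd c (2 * m + 1) (2 * h + 1) →
        W ^ 2 = ι * W :=
  stmt3_general h c ι hι hcomm
end
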